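/- Let α be a strongly continuous one-parameter group on the complex Banach space V, and assume α is polynomially bounded (there exist C > 0 and N ∈ ℕ with ‖α_t‖ ≤ C(1 + |t|^N) for all t ∈ ℝ). Then for every subset E ⊆ ℝ the set V(E)₀ is closed in V, and V(E)₀ = V(E) = V⁺(E). -/

import Mathlib

open MeasureTheory Filter
open scoped Pointwise

namespace ArvesonPaper

/-- The Fourier transform `f̂(p) = ∫ f(t) e^{itp} dt` of a Schwartz function. -/
noncomputable def fourierT (f : SchwartzMap ℝ ℂ) (p : ℝ) : ℂ :=
  ∫ t : ℝ, f t * Complex.exp (Complex.I * (t : ℂ) * (p : ℂ))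

variable {V : Type*} [NormedAddCommGroup V] [NormedSpace ℂ V]

/-- `α_f(v) = ∫ f(t) α_t(v) dt` (Bochner integral). -/
noncomputable def smear (α : ℝ → V →L[ℂ] V) (f : SchwartzMap ℝ ℂ) (v : V) : V :=
  ∫ t : ℝ, f t • α t v

/-- A one-parameter group of (automatically invertible) continuous linear maps. -/
def IsOneParamGroup (α : ℝ → V →L[ℂ] V) : Prop :=
  α 0 = ContinuousLinearMap.id ℂ V ∧ ∀ s t : ℝ, α (s + t) = (α s).comp (α t)

/-- Strong continuity: each orbit map is continuous. -/
def StronglyCts (α : ℝ → V →L[ℂ] V) : Prop :=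
  ∀ v : V, Continuous fun t : ℝ => α t v

/-- Pointwise polynomial boundedness of a one-parameter group. -/
def PtwisePolyBdd (α : ℝ → V →L[ℂ] V) : Prop :=
  ∀ v : V, ∃ C : ℝ, 0 < C ∧ ∃ N : ℕ, ∀ t : ℝ, ‖α t v‖ ≤ C * (1 + |t| ^ N)

/-- Polynomial boundedness (in operator norm) of a one-parameter group. -/
def PolyBdd (α : ℝ → V →L[ℂ] V) : Prop :=
  ∃ C : ℝ, 0 < C ∧ ∃ N : ℕ, ∀ t : ℝ, ‖α t‖ ≤ C * (1 + |t| ^ N)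

/-- The Arveson spectrum of a vector `v`. -/
def arvSpec (α : ℝ → V →L[ℂ] V) (v : V) : Set ℝ :=
  {p : ℝ | ∀ f : SchwartzMap ℝ ℂ, smear α f v = 0 → fourierT f p = 0}

/-- The Arveson spectrum of the whole representation. -/
def arvSpecFull (α : ℝ → V →L[ℂ] V) : Set ℝ :=
  {p : ℝ | ∀ f : SchwartzMap ℝ ℂ, (∀ v : V, smear α f v = 0) → fourierT f p = 0}

/-- The spectral subspace `V(E)₀` of vectors with Arveson spectrum in `closure E`. -/
def specSub₀ (α : ℝ → V →L[ℂ] V) (E : Set ℝ) : Set V :=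
  {v : V | arvSpec α v ⊆ closure E}

/-- The closed spectral subspace `V(E)`. -/
def specSub (α : ℝ → V →L[ℂ] V) (E : Set ℝ) : Set V :=
  closure (specSub₀ α E)

/-- The spectral subspace `V⁺(E) = ⋂_{ε>0} V(E + (−ε, ε))`. -/
def specSubPlus (α : ℝ → V →L[ℂ] V) (E : Set ℝ) : Set V :=
  ⋂ ε > (0 : ℝ), specSub α (E + Set.Ioo (-ε) ε)

/-! If `p ∉ closure E` and `v` is a limit of vectors `w` with `Spec_α(w) ⊆ closure E`, take a
bump `φ` at Mathlib's frequency `-p / 2π` supported where `-2πx ∉ closure E`. Near each point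
of its (compact) support some `𝓕 f` with `α_f w = 0` is nonzero; dividing `φ` by
`∑ |𝓕 fᵢ|²` over a finite subcover writes `φ = ∑ bᵢ · 𝓕 fᵢ`, so `𝓕⁻ φ = ∑ 𝓕⁻ bᵢ ⋆ fᵢ` and
`α_{𝓕⁻ φ} w = ∑ α_{𝓕⁻ bᵢ} (α_{fᵢ} w) = 0`. Polynomial boundedness makes `w ↦ α_{𝓕⁻ φ} w`
continuous, hence `α_{𝓕⁻ φ} v = 0`, whereas `𝓕⁻ φ` has Fourier transform `1` at `p`. So
`V(E)₀` is closed, and `V⁺(E) = V(E)₀` because `⋂ ε, closure (E + (-ε, ε)) = closure E`. -/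

open Complex Real
open Set Metric
open scoped FourierTransform SchwartzMap Topology ComplexConjugate ContDiff

theorem fourier_apply_eq_fourierT (f : 𝓢(ℝ, ℂ)) (x : ℝ) :
    𝓕 f x = fourierT f (-(2 * π * x)) := by
  rw [SchwartzMap.fourier_coe, Real.fourier_real_eq_integral_exp_smul, fourierT]
  congr 1 with t
  rw [smul_eq_mul, mul_comm]
  push_cast
  ring_nf

theorem fourierT_fourierInv (g : 𝓢(ℝ, ℂ)) (p : ℝ) :
    fourierT (𝓕⁻ g) p = g (-(p / (2 * π))) := by
  have h := fourier_apply_eq_fourierT (𝓕⁻ g) (-(p / (2 * π)))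
  rw [FourierTransform.fourier_fourierInv_eq] at h
  rw [h]
  congr 1
  field_simp

theorem fourierInv_pairing_mul (g h : 𝓢(ℝ, ℂ)) :
    𝓕⁻ (SchwartzMap.pairing (ContinuousLinearMap.mul ℂ ℂ) g h) =
      SchwartzMap.convolution (ContinuousLinearMap.mul ℂ ℂ) (𝓕⁻ g) (𝓕⁻ h) := by
  simp [SchwartzMap.convolution]

theorem exists_schwartz_hasCompactSupport_eq_one {U : Set ℝ} {x₀ : ℝ} (hU : U ∈ 𝓝 x₀) :
    ∃ φ : 𝓢(ℝ, ℂ), HasCompactSupport φ ∧ tsupport φ ⊆ U ∧ φ x₀ = 1 := by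
  obtain ⟨φ, hφU, hφc, hφs, -, hφ1⟩ := exists_contDiff_tsupport_subset (n := ⊤) hU
  have hc : HasCompactSupport fun x => (φ x : ℂ) := hφc.comp_left ofReal_zero
  have hs : ContDiff ℝ ∞ fun x => (φ x : ℂ) := ofRealCLM.contDiff.comp hφs
  refine ⟨hc.toSchwartzMap hs, hc, ?_, by simp [hφ1]⟩
  exact (tsupport_comp_subset ofReal_zero φ).trans hφU

theorem contDiff_div_of_ne_zero_on_tsupport {E : Type*} [NormedAddCommGroup E] [NormedSpace ℝ E]
    {n : WithTop ℕ∞} {φ D : E → ℂ} (hφ : ContDiff ℝ n φ) (hD : ContDiff ℝ n D)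
    (hne : ∀ x ∈ tsupport φ, D x ≠ 0) : ContDiff ℝ n fun x => φ x / D x := by
  refine contDiff_iff_contDiffAt.2 fun x => ?_
  by_cases hx : x ∈ tsupport φ
  · exact hφ.contDiffAt.mul (hD.contDiffAt.inv (hne x hx))
  · refine (contDiffAt_const (c := (0 : ℂ))).congr_of_eventuallyEq ?_
    filter_upwards [notMem_tsupport_iff_eventuallyEq.1 hx] with y hy
    simp [hy]

theorem exists_sum_mul_eq_of_forall_exists_ne_zero {E ι : Type*} [NormedAddCommGroup E]
    [NormedSpace ℝ E] {n : WithTop ℕ∞} {φ : E → ℂ} (hφ : ContDiff ℝ n φ)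
    (hφc : HasCompactSupport φ) (s : Finset ι) {β : ι → E → ℂ} (hβ : ∀ i, ContDiff ℝ n (β i))
    (hcover : ∀ x ∈ tsupport φ, ∃ i ∈ s, β i x ≠ 0) :
    ∃ b : ι → E → ℂ, (∀ i, ContDiff ℝ n (b i) ∧ HasCompactSupport (b i)) ∧
      ∀ x, φ x = ∑ i ∈ s, b i x * β i x := by
  set D : E → ℂ := fun x => ∑ i ∈ s, ((‖β i x‖ ^ 2 : ℝ) : ℂ)
  have hD : ContDiff ℝ n D :=
    ContDiff.sum fun i _ => ofRealCLM.contDiff.comp ((hβ i).norm_sq ℝ)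
  have hDne : ∀ x ∈ tsupport φ, D x ≠ 0 := by
    intro x hx
    obtain ⟨i, hi, hβi⟩ := hcover x hx
    simp only [D, ← ofReal_sum, ofReal_ne_zero]
    exact (Finset.sum_pos' (fun j _ => by positivity) ⟨i, hi, by positivity⟩).ne'
  have hψ := contDiff_div_of_ne_zero_on_tsupport hφ hD hDne
  refine ⟨fun i x => φ x / D x * conj (β i x), fun i => ⟨hψ.mul ?_, ?_⟩, fun x => ?_⟩
  · exact conjCLE.toContinuousLinearMap.contDiff.comp (hβ i)
  · exact (hφc.mul_right (f' := fun x => (D x)⁻¹)).mul_right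
  · have hφD : φ x = φ x / D x * D x := by
      by_cases hx : x ∈ tsupport φ
      · rw [div_mul_cancel₀ _ (hDne x hx)]
      · simp [image_eq_zero_of_notMem_tsupport hx]
    rw [hφD, Finset.mul_sum]
    refine Finset.sum_congr rfl fun i _ => ?_
    rw [mul_assoc, conj_mul', ofReal_pow]

theorem integrable_one_add_norm_pow_mul {D F : Type*} [NormedAddCommGroup D] [NormedSpace ℝ D]
    [MeasurableSpace D] [BorelSpace D] [SecondCountableTopology D] [NormedAddCommGroup F]
    [NormedSpace ℝ F] {μ : Measure D} [μ.HasTemperateGrowth] (f : 𝓢(D, F)) (N : ℕ) :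
    Integrable (fun x => (1 + ‖x‖) ^ N * ‖f x‖) μ := by
  simp_rw [add_comm (1 : ℝ), add_pow, one_pow, mul_one, Finset.sum_mul]
  exact integrable_finsetSum _ fun k _ => by
    simpa [mul_right_comm] using (f.integrable_pow_mul μ k).mul_const (N.choose k : ℝ)

section Smear

variable {α : ℝ → V →L[ℂ] V} {C : ℝ} {N : ℕ}

theorem norm_smul_orbit_le (hα : ∀ t, ‖α t‖ ≤ C * (1 + ‖t‖) ^ N) (f : 𝓢(ℝ, ℂ)) (v : V)
    (t : ℝ) : ‖f t • α t v‖ ≤ C * ‖v‖ * ((1 + ‖t‖) ^ N * ‖f t‖) := by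
  rw [norm_smul]
  calc ‖f t‖ * ‖α t v‖ ≤ ‖f t‖ * (C * (1 + ‖t‖) ^ N * ‖v‖) :=
        mul_le_mul_of_nonneg_left ((α t).le_of_opNorm_le (hα t) v) (norm_nonneg _)
    _ = C * ‖v‖ * ((1 + ‖t‖) ^ N * ‖f t‖) := by ring

theorem integrable_smul_orbit (hsc : StronglyCts α) (hα : ∀ t, ‖α t‖ ≤ C * (1 + ‖t‖) ^ N)
    (f : 𝓢(ℝ, ℂ)) (v : V) : Integrable fun t => f t • α t v :=
  ((integrable_one_add_norm_pow_mul f N).const_mul (C * ‖v‖)).mono'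
    (f.continuous.smul (hsc v)).aestronglyMeasurable
    (Eventually.of_forall (norm_smul_orbit_le hα f v))

theorem norm_smear_le (hα : ∀ t, ‖α t‖ ≤ C * (1 + ‖t‖) ^ N) (f : 𝓢(ℝ, ℂ)) (v : V) :
    ‖smear α f v‖ ≤ (C * ∫ t, (1 + ‖t‖) ^ N * ‖f t‖) * ‖v‖ :=
  calc ‖smear α f v‖ ≤ ∫ t, C * ‖v‖ * ((1 + ‖t‖) ^ N * ‖f t‖) :=
        norm_integral_le_of_norm_le ((integrable_one_add_norm_pow_mul f N).const_mul _)
          (Eventually.of_forall (norm_smul_orbit_le hα f v))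
    _ = (C * ∫ t, (1 + ‖t‖) ^ N * ‖f t‖) * ‖v‖ := by rw [integral_const_mul]; ring

theorem smear_add (hsc : StronglyCts α) (hα : ∀ t, ‖α t‖ ≤ C * (1 + ‖t‖) ^ N)
    (f : 𝓢(ℝ, ℂ)) (v w : V) : smear α f (v + w) = smear α f v + smear α f w := by
  simp only [smear, map_add, smul_add]
  exact integral_add (integrable_smul_orbit hsc hα f v) (integrable_smul_orbit hsc hα f w)

theorem continuous_smear (hsc : StronglyCts α) (hα : ∀ t, ‖α t‖ ≤ C * (1 + ‖t‖) ^ N)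
    (f : 𝓢(ℝ, ℂ)) : Continuous (smear α f) :=
  AddMonoidHomClass.continuous_of_bound (AddMonoidHom.mk' _ (smear_add hsc hα f)) _
    (norm_smear_le hα f)

theorem smear_zero (f : 𝓢(ℝ, ℂ)) : smear α f 0 = 0 := by
  simp [smear]

theorem smear_sum {ι : Type*} (hsc : StronglyCts α) (hα : ∀ t, ‖α t‖ ≤ C * (1 + ‖t‖) ^ N)
    (s : Finset ι) (f : ι → 𝓢(ℝ, ℂ)) (v : V) :
    smear α (∑ i ∈ s, f i) v = ∑ i ∈ s, smear α (f i) v := by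
  simp only [smear, sum_apply, Finset.sum_smul]
  exact integral_finsetSum s fun i _ => integrable_smul_orbit hsc hα (f i) v

theorem integrable_convolution_smul_orbit (hsc : StronglyCts α)
    (hα : ∀ t, ‖α t‖ ≤ C * (1 + ‖t‖) ^ N) (a b : 𝓢(ℝ, ℂ)) (v : V) :
    Integrable (Function.uncurry fun s u => (a s * b (u - s)) • α u v) (volume.prod volume) := by
  have hweight : ∀ s u : ℝ, (1 + ‖u‖) ^ N ≤ (1 + ‖s‖) ^ N * (1 + ‖u - s‖) ^ N := by
    intro s u
    rw [← mul_pow]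
    gcongr
    nlinarith [norm_nonneg s, norm_nonneg (u - s), norm_le_insert' u s]
  have hdom := ((integrable_one_add_norm_pow_mul (μ := volume) a N).convolution_integrand
    (ContinuousLinearMap.mul ℝ ℝ) (integrable_one_add_norm_pow_mul (μ := volume) b N)).swap
  refine (hdom.const_mul (C * ‖v‖)).mono' ?_ (Eventually.of_forall fun p => ?_)
  · exact ((a.continuous.comp continuous_fst).mul
      (b.continuous.comp (continuous_snd.sub continuous_fst))).smul
      ((hsc v).comp continuous_snd) |>.aestronglyMeasurable
  · obtain ⟨s, u⟩ := p
    simp only [Function.uncurry_apply_pair, Function.comp_apply, Prod.swap_prod_mk,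
      ContinuousLinearMap.mul_apply']
    calc ‖(a s * b (u - s)) • α u v‖ ≤ ‖a s‖ * ‖b (u - s)‖ * (C * (1 + ‖u‖) ^ N * ‖v‖) := by
          rw [norm_smul, norm_mul]
          exact mul_le_mul_of_nonneg_left ((α u).le_of_opNorm_le (hα u) v) (by positivity)
      _ ≤ ‖a s‖ * ‖b (u - s)‖ * (C * ((1 + ‖s‖) ^ N * (1 + ‖u - s‖) ^ N) * ‖v‖) := by
          have hC : 0 ≤ C := (norm_nonneg _).trans ((hα 0).trans_eq (by simp))
          gcongr
          exact hweight s u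
      _ = _ := by ring

variable [CompleteSpace V]

theorem apply_smear (hgrp : IsOneParamGroup α) (hsc : StronglyCts α)
    (hα : ∀ t, ‖α t‖ ≤ C * (1 + ‖t‖) ^ N) (f : 𝓢(ℝ, ℂ)) (v : V) (s : ℝ) :
    α s (smear α f v) = ∫ u, f (u - s) • α u v := by
  rw [smear, ← (α s).integral_comp_comm (integrable_smul_orbit hsc hα f v),
    ← integral_add_right_eq_self (fun u => f (u - s) • α u v) s]
  congr 1 with t
  rw [map_smul, add_sub_cancel_right, add_comm t, hgrp.2]
  rfl

theorem smear_convolution (hgrp : IsOneParamGroup α) (hsc : StronglyCts α)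
    (hα : ∀ t, ‖α t‖ ≤ C * (1 + ‖t‖) ^ N) (a b : 𝓢(ℝ, ℂ)) (v : V) :
    smear α (SchwartzMap.convolution (ContinuousLinearMap.mul ℂ ℂ) a b) v =
      smear α a (smear α b v) := by
  symm
  calc smear α a (smear α b v) = ∫ s, a s • ∫ u, b (u - s) • α u v := by
        simp only [smear, ← apply_smear hgrp hsc hα]
    _ = ∫ s, ∫ u, (a s * b (u - s)) • α u v := by simp only [← integral_smul, smul_smul]
    _ = ∫ u, ∫ s, (a s * b (u - s)) • α u v :=
        integral_integral_swap (integrable_convolution_smul_orbit hsc hα a b v)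
    _ = ∫ u, (∫ s, a s * b (u - s)) • α u v := by simp only [integral_smul_const]
    _ = _ := by
        simp only [smear, SchwartzMap.convolution_apply, convolution_def,
          ContinuousLinearMap.mul_apply']

theorem smear_fourierInv_eq_zero (hgrp : IsOneParamGroup α) (hsc : StronglyCts α)
    (hα : ∀ t, ‖α t‖ ≤ C * (1 + ‖t‖) ^ N) {w : V} {φ : 𝓢(ℝ, ℂ)} (hφ : HasCompactSupport φ)
    (hspec : ∀ x ∈ tsupport φ, -(2 * π * x) ∉ arvSpec α w) : smear α (𝓕⁻ φ) w = 0 := by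
  have hloc : ∀ x ∈ tsupport φ, ∃ f : 𝓢(ℝ, ℂ), smear α f w = 0 ∧ 𝓕 f x ≠ 0 := by
    intro x hx
    simpa [arvSpec, fourier_apply_eq_fourierT] using hspec x hx
  choose! f hfw hfx using hloc
  obtain ⟨t, ht, hcover⟩ := hφ.isCompact.elim_nhds_subcover (fun x => {y | 𝓕 (f x) y ≠ 0})
    fun x hx => (isOpen_ne_fun (𝓕 (f x)).continuous continuous_const).mem_nhds (hfx x hx)
  obtain ⟨b, hb, hφb⟩ := exists_sum_mul_eq_of_forall_exists_ne_zero (φ.smooth ⊤) hφ t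
    (fun x => (𝓕 (f x)).smooth ⊤) fun y hy => by simpa using hcover hy
  have hφsum : φ = ∑ x ∈ t, SchwartzMap.pairing (ContinuousLinearMap.mul ℂ ℂ)
      ((hb x).2.toSchwartzMap (hb x).1) (𝓕 (f x)) := by
    ext y
    simp [hφb]
  rw [hφsum, FourierTransform.fourierInv_sum, smear_sum hsc hα]
  refine Finset.sum_eq_zero fun x hx => ?_
  rw [fourierInv_pairing_mul, smear_convolution hgrp hsc hα,
    FourierTransform.fourierInv_fourier_eq, hfw x (ht x hx), smear_zero]

theorem isClosed_specSub₀ (hgrp : IsOneParamGroup α) (hsc : StronglyCts α)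
    (hα : ∀ t, ‖α t‖ ≤ C * (1 + ‖t‖) ^ N) (F : Set ℝ) : IsClosed (specSub₀ α F) := by
  refine isClosed_of_closure_subset fun v hv p hp => ?_
  by_contra hpF
  have hU : {x : ℝ | -(2 * π * x) ∉ closure F} ∈ 𝓝 (-(p / (2 * π))) := by
    refine (isClosed_closure.isOpen_compl.preimage (by fun_prop)).mem_nhds ?_
    simpa [mul_div_cancel₀ p two_pi_pos.ne'] using hpF
  obtain ⟨φ, hφc, hφU, hφ1⟩ := exists_schwartz_hasCompactSupport_eq_one hU
  have hzero : specSub₀ α F ⊆ smear α (𝓕⁻ φ) ⁻¹' {0} := fun w hw =>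
    smear_fourierInv_eq_zero hgrp hsc hα hφc fun x hx hxw => hφU hx (hw hxw)
  have hv0 := closure_minimal hzero (isClosed_singleton.preimage (continuous_smear hsc hα _)) hv
  have hp0 := hp _ hv0
  rw [fourierT_fourierInv, hφ1] at hp0
  exact one_ne_zero hp0

end Smear

theorem closure_eq_biInter_closure_thickening {X : Type*} [PseudoEMetricSpace X] (E : Set X) :
    closure E = ⋂ ε > 0, closure (thickening ε E) := by
  refine subset_antisymm (subset_iInter₂ fun ε hε => closure_mono
    (self_subset_thickening hε E)) ?_
  rw [closure_eq_iInter_cthickening]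
  exact iInter₂_mono fun ε _ => closure_thickening_subset_cthickening ε E

theorem biInter_specSub₀_add_Ioo (α : ℝ → V →L[ℂ] V) (E : Set ℝ) :
    ⋂ ε > (0 : ℝ), specSub₀ α (E + Set.Ioo (-ε) ε) = specSub₀ α E := by
  have hthick (ε : ℝ) : E + Set.Ioo (-ε) ε = thickening ε E := by
    rw [← add_ball_zero, Real.ball_eq_Ioo, zero_sub, zero_add]
  ext v
  simp only [specSub₀, hthick, closure_eq_biInter_closure_thickening E, subset_iInter_iff,
    mem_iInter, mem_ofPred_eq, gt_iff_lt]

theorem PolyBdd.exists_norm_le_mul_one_add_norm_pow {α : ℝ → V →L[ℂ] V} (hpb : PolyBdd α) :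
    ∃ C : ℝ, ∃ N : ℕ, ∀ t, ‖α t‖ ≤ C * (1 + ‖t‖) ^ N := by
  obtain ⟨C, hC, N, hbound⟩ := hpb
  refine ⟨2 * C, N, fun t => (hbound t).trans ?_⟩
  have h1 : 1 ≤ (1 + ‖t‖) ^ N := one_le_pow₀ (by simp)
  have h2 : |t| ^ N ≤ (1 + ‖t‖) ^ N := by gcongr; simp
  nlinarith

/-- If the one-parameter group `α` is polynomially bounded (in operator norm), then for every
subset `E ⊆ ℝ` the spectral subspace `V(E)₀` is closed and `V(E)₀ = V(E) = V⁺(E)`. -/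
theorem specSub₀_closed_of_polyBdd
    {V : Type*} [NormedAddCommGroup V] [NormedSpace ℂ V] [CompleteSpace V]
    (α : ℝ → V →L[ℂ] V) (hgrp : IsOneParamGroup α)
    (hsc : StronglyCts α) (hpb : PolyBdd α) (E : Set ℝ) :
    IsClosed (specSub₀ α E) ∧ specSub₀ α E = specSub α E ∧ specSub α E = specSubPlus α E := by
  obtain ⟨C, N, hα⟩ := hpb.exists_norm_le_mul_one_add_norm_pow
  have hclosed (F : Set ℝ) : IsClosed (specSub₀ α F) := isClosed_specSub₀ hgrp hsc hα F
  refine ⟨hclosed E, (hclosed E).closure_eq.symm, ?_⟩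
  simp only [specSubPlus, specSub, (hclosed _).closure_eq, biInter_specSub₀_add_Ioo]

end ArvesonPaper
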